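/- arXiv:2106.06570 — 2 statements merged into one kernel-verified Lean document; each statement's English description precedes it below -/
import Mathlib

section
/- Let R be a commutative ring, I an ideal of R such that the R-module R/I has finite length n, m a maximal ideal of R, and φ : I → R/m a surjective R-module homomorphism. Then the kernel J = ker(φ) is an ideal of R contained in I such that I/J is isomorphic to R/m as an R-module and R/J has length n+1. -/
/-! Since `J ≤ I`, the sequence `0 → I/J → R/J → R/I → 0` is exact, and `I/J ≅ R/m` is simple, so
additivity of length gives `ℓ(R/J) = n + 1`. -/

/-- The length of a module, i.e. the supremum of lengths of chains of submodules. -/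
noncomputable def moduleLength (R M : Type*) [Ring R] [AddCommGroup M] [Module R M] : ℕ∞ :=
  Order.height (⊤ : Submodule R M)

lemma moduleLength_eq_length (R M : Type*) [Ring R] [AddCommGroup M] [Module R M] :
    moduleLength R M = Module.length R M :=
  (Module.length_eq_height R M).symm

open Submodule in
lemma Module.length_quotient_eq_add_of_le {R M : Type*} [Ring R] [AddCommGroup M] [Module R M]
    {N P : Submodule R M} (h : N ≤ P) :
    Module.length R (M ⧸ N) =
      Module.length R (M ⧸ P) + Module.length R (P ⧸ N.comap P.subtype) := by
  rw [add_comm]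
  refine Module.length_eq_add_of_exact (mapQ _ N P.subtype le_rfl) (factor h) ?_
    (factor_surjective h) ?_
  · rw [← LinearMap.ker_eq_bot, ker_mapQ, mkQ_map_self]
  · simp [LinearMap.exact_iff, factor, ker_mapQ, range_mapQ]

/-- elementary transformations. Let `R` be a commutative ring, `I` an ideal
with `R/I` of finite length `n`, `m` a maximal ideal, and `φ : I → R/m` a surjective `R`-module
map.  Then `J = ker φ` is an ideal of `R` contained in `I`, with `I/J ≅ R/m` as `R`-modules and
`R/J` of length `n + 1`. -/
theorem kernel_of_surjection_onto_residue_field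
    (R : Type*) [CommRing R] (I : Ideal R) (n : ℕ)
    (hlen : moduleLength R (R ⧸ I) = n)
    (m : Ideal R) (hm : m.IsMaximal)
    (φ : ↥I →ₗ[R] R ⧸ m) (hφ : Function.Surjective φ) :
    ∀ J : Ideal R, J = Submodule.map I.subtype (LinearMap.ker φ) →
      J ≤ I ∧
      Nonempty ((↥I ⧸ Submodule.comap I.subtype J) ≃ₗ[R] R ⧸ m) ∧
      moduleLength R (R ⧸ J) = n + 1 := by
  rintro J rfl
  have hJI : (LinearMap.ker φ).map I.subtype ≤ I := Submodule.map_subtype_le I _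
  let e : (I ⧸ ((LinearMap.ker φ).map I.subtype).comap I.subtype) ≃ₗ[R] R ⧸ m :=
    Submodule.quotEquivOfEq _ _ (Submodule.comap_map_eq_of_injective I.injective_subtype _) ≪≫ₗ
      φ.quotKerEquivOfSurjective hφ
  have : IsSimpleModule R (R ⧸ m) := isSimpleModule_iff_isCoatom.mpr hm.out
  refine ⟨hJI, ⟨e⟩, ?_⟩
  rw [moduleLength_eq_length, Module.length_quotient_eq_add_of_le hJI, ← moduleLength_eq_length,
    hlen, e.length_eq, Module.length_eq_one]
end

section
/- Let R = ℂ[x,y] and m = (x,y). Fix integers d ≥ 1 and 1 ≤ j ≤ d, and arbitrary coefficients c_{i,i'} ∈ ℂ for 0 ≤ i ≤ d−j and d−j+1 ≤ i' ≤ d. Let I be the ideal of R generated by m^{d+1} together with the d+1−j polynomials f_i = x^{d−i} y^{i} + Σ_{i'=d−j+1}^{d} c_{i,i'} x^{d−i'} y^{i'} for 0 ≤ i ≤ d−j. Then m^{d+1} ⊆ I ⊆ m^{d}, and dim_ℂ(ℂ[x,y]/I) = d(d+1)/2 + j. -/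
/-!
The monomials `x^a y^b` with `a + b < d`, together with `x^(d-b) y^b` for `d - j < b ≤ d`, span a
vector-space complement of `I`. They span modulo `I` because `m^(d+1) ⊆ I` and `f_i` expresses
`x^(d-i) y^i` through them. They are independent modulo `I` because `m • f_i ⊆ m^(d+1)`, so that
`I = m^(d+1) + span_ℂ {f_i}` as a vector space, and the coefficient of `x^(d-k) y^k` in
`∑ a_i f_i` is `a_k`. There are `d(d+1)/2 + j` such monomials.
-/

open MvPolynomial

section General

variable {σ R : Type*} [CommRing R]

theorem sub_C_coeff_zero_mem_idealOfVars (r : MvPolynomial σ R) :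
    r - C (coeff 0 r) ∈ idealOfVars σ R := by
  rw [← pow_one (idealOfVars σ R), mem_pow_idealOfVars_iff']
  intro n hn
  rw [Nat.lt_one_iff, Finsupp.degree_eq_zero_iff] at hn
  simp [hn]

theorem mul_sub_coeff_zero_smul_mem_pow_idealOfVars {k : ℕ} {x : MvPolynomial σ R}
    (hx : x ∈ idealOfVars σ R ^ k) (r : MvPolynomial σ R) :
    r * x - coeff 0 r • x ∈ idealOfVars σ R ^ (k + 1) := by
  rw [smul_eq_C_mul, ← sub_mul, pow_succ']
  exact Ideal.mul_mem_mul (sub_C_coeff_zero_mem_idealOfVars r) hx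

theorem restrictScalars_pow_idealOfVars_sup_span {k : ℕ} {F : Set (MvPolynomial σ R)}
    (hF : F ⊆ (idealOfVars σ R ^ k : Ideal (MvPolynomial σ R))) :
    (idealOfVars σ R ^ (k + 1) ⊔ Ideal.span F).restrictScalars R =
      (idealOfVars σ R ^ (k + 1)).restrictScalars R ⊔ Submodule.span R F := by
  rw [Submodule.restrictScalars_sup]
  refine le_antisymm (sup_le le_sup_left fun w hw => ?_)
    (sup_le_sup_left (Submodule.span_le_restrictScalars R _ F) _)
  rw [Submodule.restrictScalars_mem] at hw
  induction hw using Submodule.span_induction with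
  | mem x hx => exact Submodule.mem_sup_right (Submodule.subset_span hx)
  | zero => exact zero_mem _
  | add x y _ _ hx hy => exact add_mem hx hy
  | smul r x hxF hx =>
    have hxk : x ∈ idealOfVars σ R ^ k := (Ideal.span_le.mpr hF) hxF
    rw [smul_eq_mul, ← sub_add_cancel (r * x) (coeff 0 r • x)]
    exact add_mem (Submodule.mem_sup_left (mul_sub_coeff_zero_smul_mem_pow_idealOfVars hxk r))
      (Submodule.smul_mem _ _ hx)

theorem coeff_eq_zero_of_mem_restrictSupport {s : Set (σ →₀ ℕ)} {p : MvPolynomial σ R}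
    (hp : p ∈ restrictSupport R s) {n : σ →₀ ℕ} (hn : n ∉ s) : coeff n p = 0 :=
  notMem_support_iff.mp fun h => hn (hp h)

theorem disjoint_restrictSupport_pow_idealOfVars {s : Set (σ →₀ ℕ)} {k : ℕ}
    (hs : ∀ n ∈ s, n.degree < k) :
    Disjoint (restrictSupport R s) ((idealOfVars σ R ^ k).restrictScalars R) := by
  rw [Submodule.disjoint_def]
  intro p hps hpk
  ext n
  rw [Submodule.restrictScalars_mem, mem_pow_idealOfVars_iff'] at hpk
  by_cases hn : n ∈ s
  · exact hpk n (hs n hn)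
  · exact coeff_eq_zero_of_mem_restrictSupport hps hn

theorem codisjoint_restrictSupport_of_monomial_mem {s : Set (σ →₀ ℕ)}
    {W : Submodule R (MvPolynomial σ R)} (h : ∀ n, monomial n 1 ∈ restrictSupport R s ⊔ W) :
    Codisjoint (restrictSupport R s) W := by
  rw [codisjoint_iff, eq_top_iff, ← restrictSupport_univ, restrictSupport_eq_span,
    Submodule.span_le]
  rintro _ ⟨n, -, rfl⟩
  exact h n

theorem finrank_quotient_eq_card_of_isCompl_restrictSupport {K : Type*} [Field K]
    (s : Finset (σ →₀ ℕ)) (I : Ideal (MvPolynomial σ K))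
    (h : IsCompl (restrictSupport K (s : Set (σ →₀ ℕ))) (I.restrictScalars K)) :
    Module.finrank K (MvPolynomial σ K ⧸ I) = s.card := by
  rw [← (Submodule.Quotient.restrictScalarsEquiv K I).finrank_eq,
    (Submodule.quotientEquivOfIsCompl _ _ h.symm).finrank_eq,
    Module.finrank_eq_card_basis (basisRestrictSupport K (s : Set (σ →₀ ℕ)))]
  exact Fintype.card_coe s

end General

section TwoVariables

open Finset

variable {R : Type*} [CommRing R]

noncomputable def finTwoFinsuppEquiv : (Fin 2 →₀ ℕ) ≃ ℕ × ℕ :=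
  Finsupp.equivFunOnFinite.trans (finTwoArrowEquiv ℕ)

theorem degree_finTwoFinsuppEquiv_symm (a b : ℕ) :
    (finTwoFinsuppEquiv.symm (a, b)).degree = a + b := by
  simp [Finsupp.degree_eq_sum, finTwoFinsuppEquiv]

theorem finTwoFinsuppEquiv_symm_apply (a b : ℕ) :
    finTwoFinsuppEquiv.symm (a, b) = Finsupp.single 0 a + Finsupp.single 1 b := by
  ext i
  fin_cases i <;> simp [finTwoFinsuppEquiv]

theorem X_zero_pow_mul_X_one_pow (a b : ℕ) :
    (X 0 ^ a * X 1 ^ b : MvPolynomial (Fin 2) R) =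
      monomial (finTwoFinsuppEquiv.symm (a, b)) 1 := by
  rw [finTwoFinsuppEquiv_symm_apply, X_pow_eq_monomial, X_pow_eq_monomial, monomial_mul, one_mul]

theorem X_zero_pow_mul_X_one_pow_mem_pow (a b : ℕ) :
    (X 0 ^ a * X 1 ^ b : MvPolynomial (Fin 2) R) ∈ idealOfVars (Fin 2) R ^ (a + b) := by
  rw [pow_add]
  exact Ideal.mul_mem_mul (Ideal.pow_mem_pow (Ideal.subset_span (Set.mem_range_self 0)) a)
    (Ideal.pow_mem_pow (Ideal.subset_span (Set.mem_range_self 1)) b)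

theorem span_X_zero_X_one : Ideal.span {X 0, X 1} = idealOfVars (Fin 2) R := by
  rw [idealOfVars]
  congr 1
  ext p
  simp [Fin.exists_fin_two, eq_comm]

noncomputable def standardExponents (d j : ℕ) : Finset (Fin 2 →₀ ℕ) :=
  ((range d).biUnion antidiagonal ∪ (Ioc (d - j) d).image fun b => (d - b, b)).map
    finTwoFinsuppEquiv.symm.toEmbedding

theorem mem_standardExponents {d j a b : ℕ} :
    finTwoFinsuppEquiv.symm (a, b) ∈ standardExponents d j ↔
      a + b < d ∨ (a + b = d ∧ d - j < b) := by
  simp only [standardExponents, mem_map_equiv, Equiv.symm_symm, Equiv.apply_symm_apply,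
    mem_union, mem_biUnion, mem_range, HasAntidiagonal.mem_antidiagonal, mem_image, mem_Ioc,
    Prod.mk.injEq]
  constructor
  · rintro (⟨k, hk, rfl⟩ | ⟨b, hb, rfl, rfl⟩) <;> omega
  · rintro (h | ⟨h, hb⟩)
    · exact Or.inl ⟨a + b, h, rfl⟩
    · exact Or.inr ⟨b, ⟨hb, by omega⟩, by omega, rfl⟩

theorem card_standardExponents {d j : ℕ} (hjd : j ≤ d) :
    (standardExponents d j).card = d * (d + 1) / 2 + j := by
  have hlow : ((range d).biUnion antidiagonal).card = d * (d + 1) / 2 := by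
    rw [card_biUnion fun k _ l _ hkl => disjoint_left.mpr fun x hk hl => hkl <|
      (HasAntidiagonal.mem_antidiagonal.mp hk).symm.trans
        (HasAntidiagonal.mem_antidiagonal.mp hl)]
    simp_rw [Nat.card_antidiagonal]
    have gauss := sum_range_succ' (fun i => i) d
    rw [sum_range_id, Nat.add_sub_cancel, add_zero] at gauss
    rw [← gauss, Nat.mul_comm]
  rw [standardExponents, card_map, card_union_of_disjoint, hlow,
    card_image_of_injective _ fun b b' h => (Prod.mk.inj h).2, Nat.card_Ioc]
  · omega
  · simp only [disjoint_left, mem_biUnion, mem_range, HasAntidiagonal.mem_antidiagonal, mem_image,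
      mem_Ioc]
    rintro _ ⟨k, hk, hsum⟩ ⟨b, hb, rfl⟩
    omega

end TwoVariables

section StepIdeal

open Finset

variable {R : Type*} [CommRing R] (d j : ℕ) (c : ℕ → ℕ → R)

noncomputable def stepGenerator (i : ℕ) : MvPolynomial (Fin 2) R :=
  X 0 ^ (d - i) * X 1 ^ i + ∑ i' ∈ Icc (d - j + 1) d, C (c i i') * X 0 ^ (d - i') * X 1 ^ i'

noncomputable def stepIdeal : Ideal (MvPolynomial (Fin 2) R) :=
  idealOfVars (Fin 2) R ^ (d + 1) ⊔ Ideal.span (stepGenerator d j c '' Set.Iic (d - j))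

variable {d j}

theorem stepGenerator_mem_pow {i : ℕ} (hi : i ≤ d) :
    stepGenerator d j c i ∈ idealOfVars (Fin 2) R ^ d := by
  refine add_mem ?_ (sum_mem fun i' hi' => ?_)
  · simpa [Nat.sub_add_cancel hi] using X_zero_pow_mul_X_one_pow_mem_pow (R := R) (d - i) i
  · rw [mul_assoc]
    refine Ideal.mul_mem_left _ _ ?_
    simpa [Nat.sub_add_cancel (mem_Icc.mp hi').2] using
      X_zero_pow_mul_X_one_pow_mem_pow (R := R) (d - i') i'

theorem stepGenerator_sub_mem_restrictSupport (i : ℕ) :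
    stepGenerator d j c i - X 0 ^ (d - i) * X 1 ^ i ∈
      restrictSupport R (standardExponents d j : Set (Fin 2 →₀ ℕ)) := by
  rw [stepGenerator, add_sub_cancel_left]
  refine sum_mem fun i' hi' => ?_
  rw [mem_Icc] at hi'
  rw [mul_assoc, X_zero_pow_mul_X_one_pow, C_mul_monomial, monomial_mem_restrictSupport,
    Finset.mem_coe, mem_standardExponents]
  left
  right
  omega

theorem coeff_stepGenerator {i k : ℕ} (hk : k ≤ d - j) :
    coeff (finTwoFinsuppEquiv.symm (d - k, k)) (stepGenerator d j c i) =
      if i = k then 1 else 0 := by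
  have hk' : finTwoFinsuppEquiv.symm (d - k, k) ∉ standardExponents d j := by
    rw [mem_standardExponents]
    omega
  have htail := coeff_eq_zero_of_mem_restrictSupport
    (stepGenerator_sub_mem_restrictSupport c i) (Finset.mem_coe.not.mpr hk')
  rw [coeff_sub, sub_eq_zero, X_zero_pow_mul_X_one_pow, coeff_monomial] at htail
  refine htail.trans (if_congr ?_ rfl rfl)
  rw [finTwoFinsuppEquiv.symm.injective.eq_iff, Prod.ext_iff]
  exact ⟨And.right, fun h => h ▸ ⟨rfl, rfl⟩⟩

theorem stepGenerator_image_subset_pow :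
    stepGenerator d j c '' Set.Iic (d - j) ⊆
      (idealOfVars (Fin 2) R ^ d : Ideal (MvPolynomial (Fin 2) R)) := by
  rintro _ ⟨i, hi, rfl⟩
  exact stepGenerator_mem_pow c (le_trans hi (Nat.sub_le d j))

theorem stepIdeal_le_pow : stepIdeal d j c ≤ idealOfVars (Fin 2) R ^ d :=
  sup_le (Ideal.pow_le_pow_right d.le_succ) (Ideal.span_le.mpr (stepGenerator_image_subset_pow c))

theorem disjoint_restrictSupport_stepIdeal :
    Disjoint (restrictSupport R (standardExponents d j : Set (Fin 2 →₀ ℕ)))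
      ((stepIdeal d j c).restrictScalars R) := by
  rw [stepIdeal, restrictScalars_pow_idealOfVars_sup_span (stepGenerator_image_subset_pow c),
    Submodule.disjoint_def]
  intro p hpV hpI
  obtain ⟨q, hq, w, hw, rfl⟩ := Submodule.mem_sup.mp hpI
  rw [Submodule.restrictScalars_mem] at hq
  rw [← Finset.coe_Iic, Submodule.mem_span_image_finset_iff_exists_fun'] at hw
  obtain ⟨a, rfl⟩ := hw
  have ha : ∀ k ∈ Iic (d - j), a k = 0 := by
    intro k hk
    rw [mem_Iic] at hk
    have hpk := coeff_eq_zero_of_mem_restrictSupport hpV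
      (n := finTwoFinsuppEquiv.symm (d - k, k)) (by rw [mem_coe, mem_standardExponents]; omega)
    have hqk : coeff (finTwoFinsuppEquiv.symm (d - k, k)) q = 0 :=
      (mem_pow_idealOfVars_iff' _ _).mp hq _ (by rw [degree_finTwoFinsuppEquiv_symm]; omega)
    simpa [coeff_sum, hqk, coeff_stepGenerator c hk, hk] using hpk
  rw [sum_eq_zero fun i hi => by rw [ha i hi, zero_smul], add_zero] at hpV ⊢
  have hdeg : ∀ n ∈ (standardExponents d j : Set (Fin 2 →₀ ℕ)), n.degree < d + 1 := by
    intro n hn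
    obtain ⟨⟨a, b⟩, rfl⟩ := finTwoFinsuppEquiv.symm.surjective n
    rw [mem_coe, mem_standardExponents] at hn
    rw [degree_finTwoFinsuppEquiv_symm]
    omega
  exact Submodule.disjoint_def.mp (disjoint_restrictSupport_pow_idealOfVars hdeg) q hpV hq

theorem codisjoint_restrictSupport_stepIdeal :
    Codisjoint (restrictSupport R (standardExponents d j : Set (Fin 2 →₀ ℕ)))
      ((stepIdeal d j c).restrictScalars R) := by
  refine codisjoint_restrictSupport_of_monomial_mem fun n => ?_
  obtain ⟨⟨a, b⟩, rfl⟩ := finTwoFinsuppEquiv.symm.surjective n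
  by_cases hs : finTwoFinsuppEquiv.symm (a, b) ∈ standardExponents d j
  · exact Submodule.mem_sup_left (by rw [monomial_mem_restrictSupport]; exact Or.inl hs)
  rw [mem_standardExponents] at hs
  rw [← X_zero_pow_mul_X_one_pow]
  rcases lt_or_ge d (a + b) with hlt | hle
  · exact Submodule.mem_sup_right (Ideal.mem_sup_left
      (Ideal.pow_le_pow_right hlt (X_zero_pow_mul_X_one_pow_mem_pow a b)))
  · obtain ⟨rfl, hb⟩ : a = d - b ∧ b ≤ d - j := by omega
    rw [← sub_sub_cancel (stepGenerator d j c b) (X 0 ^ (d - b) * X 1 ^ b)]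
    exact sub_mem
      (Submodule.mem_sup_right (Ideal.mem_sup_right (Ideal.subset_span ⟨b, hb, rfl⟩)))
      (Submodule.mem_sup_left (stepGenerator_sub_mem_restrictSupport c b))

end StepIdeal

theorem finrank_quotient_stepIdeal {K : Type*} [Field K] {d j : ℕ} (c : ℕ → ℕ → K)
    (hjd : j ≤ d) :
    Module.finrank K (MvPolynomial (Fin 2) K ⧸ stepIdeal d j c) = d * (d + 1) / 2 + j := by
  rw [finrank_quotient_eq_card_of_isCompl_restrictSupport _ _
    ⟨disjoint_restrictSupport_stepIdeal c, codisjoint_restrictSupport_stepIdeal c⟩,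
    card_standardExponents hjd]

theorem colength_of_graded_step_ideal_general
    (d j : ℕ) (hjd : j ≤ d)
    (c : ℕ → ℕ → ℂ) :
    ∀ (m I : Ideal (MvPolynomial (Fin 2) ℂ)),
      m = Ideal.span {X 0, X 1} →
      I = m ^ (d + 1) ⊔ Ideal.span
          ((fun i : ℕ => X 0 ^ (d - i) * X 1 ^ i +
              ∑ i' ∈ Finset.Icc (d - j + 1) d, C (c i i') * X 0 ^ (d - i') * X 1 ^ i') ''
            Set.Iic (d - j)) →
      m ^ (d + 1) ≤ I ∧ I ≤ m ^ d ∧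
        Module.finrank ℂ (MvPolynomial (Fin 2) ℂ ⧸ I) = d * (d + 1) / 2 + j := by
  rintro m I rfl rfl
  rw [span_X_zero_X_one]
  exact ⟨le_sup_left, stepIdeal_le_pow c, finrank_quotient_stepIdeal c hjd⟩

/-- In `R = ℂ[x,y]` with `m = (x,y)`, fix `d ≥ 1`, `1 ≤ j ≤ d`, and
coefficients `c i i'` for `0 ≤ i ≤ d-j`, `d-j+1 ≤ i' ≤ d`.  Let `I` be the ideal generated by
`m^(d+1)` together with the polynomials
`f i = x^(d-i) y^i + ∑_{i'=d-j+1}^{d} c i i' • x^(d-i') y^(i')` for `0 ≤ i ≤ d-j`.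
Then `m^(d+1) ⊆ I ⊆ m^d` and `dim_ℂ (ℂ[x,y]/I) = d(d+1)/2 + j`. -/
theorem colength_of_graded_step_ideal
    (d j : ℕ) (hd : 1 ≤ d) (hj : 1 ≤ j) (hjd : j ≤ d)
    (c : ℕ → ℕ → ℂ) :
    ∀ (m I : Ideal (MvPolynomial (Fin 2) ℂ)),
      m = Ideal.span {X 0, X 1} →
      I = m ^ (d + 1) ⊔ Ideal.span
          ((fun i : ℕ => X 0 ^ (d - i) * X 1 ^ i +
              ∑ i' ∈ Finset.Icc (d - j + 1) d, C (c i i') * X 0 ^ (d - i') * X 1 ^ i') ''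
            Set.Iic (d - j)) →
      m ^ (d + 1) ≤ I ∧ I ≤ m ^ d ∧
        Module.finrank ℂ (MvPolynomial (Fin 2) ℂ ⧸ I) = d * (d + 1) / 2 + j :=
  colength_of_graded_step_ideal_general d j hjd c
end
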